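/- arXiv:1903.01783 — 7 statements merged into one kernel-verified Lean document; each statement's English description precedes it below -/
import Mathlib

section
/- Let A be a commutative ring, f ∈ A[T] a monic polynomial of degree n ≥ 1, C = A[T]/(f), and γ ∈ C the image of T, so that C is a free A-module with basis 1, γ, …, γ^{n−1}. Let λ : C → A be the unique A-linear map with λ(γ^i) = 0 for 0 ≤ i ≤ n−2 and λ(γ^{n−1}) = 1. Then for every c ∈ C, the trace of the A-linear endomorphism 'multiplication by c' on C equals λ(f′(γ)·c), where f′ is the formal derivative of f. -/
/-!
Write `f = ∑ aₖ Tᵏ` and let `eᵢ ∈ C` be the image of `divX^[i] f = ∑ₖ a_{k+i} Tᵏ`, so `e₀ = 0`.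
Since `γ · e_{i+1} = eᵢ - aᵢ`, induction on `j` shows `λ(e_{i+1} γʲ) = δᵢⱼ`: the `e_{i+1}` form
the dual basis of the `γⁱ` for the pairing `(x, y) ↦ λ(xy)`. Hence
`tr(c) = ∑ᵢ λ(e_{i+1} c γⁱ) = λ(c ∑ᵢ e_{i+1} γⁱ)`, and `∑ᵢ divX^[i+1] f · Tⁱ = f′`.
-/

open Polynomial

namespace Polynomial

variable {R : Type*} [Semiring R]

theorem coeff_iterate_divX (p : R[X]) (k m : ℕ) : (divX^[k] p).coeff m = p.coeff (m + k) := by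
  induction k generalizing m with
  | zero => rfl
  | succ k ih => rw [Function.iterate_succ_apply', coeff_divX, ih, add_assoc, add_comm 1 k]

theorem natDegree_iterate_divX (p : R[X]) (k : ℕ) :
    (divX^[k] p).natDegree = p.natDegree - k := by
  induction k generalizing p with
  | zero => rfl
  | succ k ih =>
    rw [Function.iterate_succ_apply, ih, natDegree_divX_eq_natDegree_tsub_one, Nat.sub_sub,
      add_comm]

theorem sum_iterate_divX_mul_X_pow {p : R[X]} {N : ℕ} (hp : p.natDegree ≤ N) :
    ∑ i ∈ Finset.range N, divX^[i + 1] p * X ^ i = derivative p := by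
  induction N generalizing p with
  | zero => rw [eq_C_of_natDegree_le_zero hp]; simp
  | succ N ih =>
    have hdivX : (divX p).natDegree ≤ N := by
      rw [natDegree_divX_eq_natDegree_tsub_one]; omega
    calc ∑ i ∈ Finset.range (N + 1), divX^[i + 1] p * X ^ i
        = X * ∑ i ∈ Finset.range N, divX^[i + 1] (divX p) * X ^ i + divX p := by
          simp only [Finset.sum_range_succ', Finset.mul_sum, Function.iterate_succ_apply,
            pow_succ', X_mul, mul_assoc, Function.iterate_zero_apply, pow_zero, mul_one]
      _ = X * derivative (divX p) + divX p := by rw [ih hdivX]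
      _ = derivative p := by
          conv_rhs => rw [← X_mul_divX_add p]
          rw [derivative_add, derivative_mul, derivative_X, derivative_C, one_mul, add_zero,
            add_comm]

end Polynomial

section DualFamily

variable {A S ι : Type*} [CommRing A] [CommRing S] [Algebra A S] [DecidableEq ι]

theorem Module.Basis.repr_eq_of_dual (b : Module.Basis ι A S) (lam : S →ₗ[A] A) (d : ι → S)
    (hd : ∀ i j, lam (d i * b j) = if i = j then 1 else 0) (i : ι) (y : S) :
    b.repr y i = lam (d i * y) := by
  have hcoord : b.coord i = lam ∘ₗ LinearMap.mulLeft A (d i) :=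
    b.ext fun j => by simp [hd, Finsupp.single_apply, eq_comm]
  exact LinearMap.congr_fun hcoord y

theorem LinearMap.trace_mul_eq_of_dual [Fintype ι] (b : Module.Basis ι A S) (lam : S →ₗ[A] A)
    (d : ι → S)
    (hd : ∀ i j, lam (d i * b j) = if i = j then 1 else 0) (c : S) :
    LinearMap.trace A S (LinearMap.mul A S c) = lam (c * ∑ i, d i * b i) := by
  rw [LinearMap.trace_eq_matrix_trace A b, Matrix.trace, Finset.mul_sum, map_sum]
  refine Finset.sum_congr rfl fun i _ => ?_
  rw [Matrix.diag_apply, LinearMap.toMatrix_apply, LinearMap.mul_apply',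
    b.repr_eq_of_dual lam d hd, mul_left_comm]

end DualFamily

namespace AdjoinRoot

variable {A : Type*} [CommRing A] {f : A[X]}

theorem root_mul_mk_divX (q : A[X]) :
    root f * mk f (divX q) = mk f q - algebraMap A (AdjoinRoot f) (q.coeff 0) := by
  have h := congrArg (mk f) (X_mul_divX_add q)
  rw [map_add, map_mul, mk_X, mk_C] at h
  rw [algebraMap_eq, ← h, add_sub_cancel_right]

theorem powerBasisAux'_apply (hf : f.Monic) (j : Fin f.natDegree) :
    powerBasisAux' hf j = root f ^ (j : ℕ) :=
  (powerBasis' hf).basis_eq_pow j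

theorem apply_mk_of_natDegree_lt (hf : f.Monic) (lam : AdjoinRoot f →ₗ[A] A)
    (hlam : ∀ i : Fin f.natDegree,
      lam (root f ^ (i : ℕ)) = if (i : ℕ) = f.natDegree - 1 then 1 else 0)
    {p : A[X]} (hp : p.natDegree < f.natDegree) :
    lam (mk f p) = p.coeff (f.natDegree - 1) := by
  have hcoord : lam = (powerBasisAux' hf).coord ⟨f.natDegree - 1, by omega⟩ :=
    (powerBasisAux' hf).ext fun j => by
      rw [Module.Basis.coord_apply, Module.Basis.repr_self, Finsupp.single_apply,
        powerBasisAux'_apply, hlam]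
      simp only [Fin.ext_iff]
  have : Nontrivial A := Nontrivial.of_polynomial_ne (ne_zero_of_natDegree_gt hp)
  rw [hcoord, Module.Basis.coord_apply, powerBasisAux'_repr_apply_to_fun, modByMonicHom_mk,
    (modByMonic_eq_self_iff hf).2 (degree_lt_degree hp)]

theorem apply_mk_iterate_divX_mul_root_pow (hf : f.Monic) (lam : AdjoinRoot f →ₗ[A] A)
    (hlam : ∀ i : Fin f.natDegree,
      lam (root f ^ (i : ℕ)) = if (i : ℕ) = f.natDegree - 1 then 1 else 0)
    {i j : ℕ} (hi : i < f.natDegree) (hj : j < f.natDegree) :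
    lam (mk f (divX^[i + 1] f) * root f ^ j) = if i = j then 1 else 0 := by
  induction j generalizing i with
  | zero =>
    rw [pow_zero, mul_one, apply_mk_of_natDegree_lt hf lam hlam (by
      rw [natDegree_iterate_divX]; omega), coeff_iterate_divX]
    rcases i with _ | i
    · rw [if_pos rfl, show f.natDegree - 1 + 1 = f.natDegree by omega, hf.coeff_natDegree]
    · rw [if_neg i.succ_ne_zero, coeff_eq_zero_of_natDegree_lt (by omega)]
  | succ j ih =>
    have hpow : lam (root f ^ j) = 0 := by
      simpa [show j ≠ f.natDegree - 1 by omega] using hlam ⟨j, by omega⟩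
    have hshift : mk f (divX^[i + 1] f) * root f ^ (j + 1)
        = (mk f (divX^[i] f) - algebraMap A _ (f.coeff i)) * root f ^ j := by
      rw [Function.iterate_succ_apply', pow_succ', ← mul_assoc, mul_comm _ (root f),
        root_mul_mk_divX, coeff_iterate_divX, zero_add]
    rw [hshift, sub_mul, map_sub, ← Algebra.smul_def, map_smul, hpow, smul_zero, sub_zero]
    rcases i with _ | i
    · simp
    · rw [ih (by omega) (by omega)]
      simp

end AdjoinRoot

open AdjoinRoot

theorem trace_eq_lambda_of_derivative_mul_general
    (A : Type*) [CommRing A] (f : A[X]) (hf : f.Monic)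
    (lam : AdjoinRoot f →ₗ[A] A)
    (hlam : ∀ i : Fin f.natDegree,
      lam ((AdjoinRoot.root f) ^ (i : ℕ)) = if (i : ℕ) = f.natDegree - 1 then 1 else 0)
    (c : AdjoinRoot f) :
    LinearMap.trace A (AdjoinRoot f) (LinearMap.mul A (AdjoinRoot f) c) =
      lam ((Polynomial.aeval (AdjoinRoot.root f)) (Polynomial.derivative f) * c) := by
  have hdual : ∀ i j : Fin f.natDegree,
      lam (mk f (divX^[i + 1] f) * powerBasisAux' hf j) = if i = j then 1 else 0 := by
    intro i j
    rw [powerBasisAux'_apply, apply_mk_iterate_divX_mul_root_pow hf lam hlam i.isLt j.isLt]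
    simp [Fin.ext_iff]
  rw [LinearMap.trace_mul_eq_of_dual _ lam _ hdual, mul_comm, aeval_eq,
    ← sum_iterate_divX_mul_X_pow le_rfl, map_sum, ← Fin.sum_univ_eq_sum_range]
  simp [powerBasisAux'_apply]

/-- **Trace via the Euler/Tate functional.**
Let `A` be a commutative ring, `f ∈ A[T]` monic of degree `n ≥ 1`,
`C = A[T]/(f)` and `γ` the image of `T`, so that `C` is free over `A` with
basis `1, γ, …, γ^{n-1}`.  Let `λ` be the `A`-linear functional extracting the
coefficient of `γ^{n-1}`.  Then for every `c ∈ C` the trace of multiplication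
by `c` on `C` equals `λ (f'(γ) * c)`. -/
theorem trace_eq_lambda_of_derivative_mul
    (A : Type*) [CommRing A] (f : A[X]) (hf : f.Monic) (hn : 1 ≤ f.natDegree)
    (lam : AdjoinRoot f →ₗ[A] A)
    (hlam : ∀ i : Fin f.natDegree,
      lam ((AdjoinRoot.root f) ^ (i : ℕ)) = if (i : ℕ) = f.natDegree - 1 then 1 else 0)
    (c : AdjoinRoot f) :
    LinearMap.trace A (AdjoinRoot f) (LinearMap.mul A (AdjoinRoot f) c) =
      lam ((Polynomial.aeval (AdjoinRoot.root f)) (Polynomial.derivative f) * c) :=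
  trace_eq_lambda_of_derivative_mul_general A f hf lam hlam c
end

section
/- Let A be a commutative ring, f ∈ A[T] monic of degree n ≥ 1, C = A[T]/(f), γ the image of T, and λ : C → A the A-linear functional with λ(γ^i) = δ_{i,n−1} for 0 ≤ i ≤ n−1. Then the C-linear map C → Hom_A(C, A) sending c to the functional x ↦ λ(c·x) is bijective; in particular Hom_A(C, A) is a free C-module of rank one with generator λ. -/
open Polynomial

/-!
In the power basis `1, γ, …, γ^(n-1)` the Gram matrix `λ(γ^(i+j))` of the pairing
`(c, x) ↦ λ(c x)` vanishes above the antidiagonal and is `1` on it, so its determinant is `±1`.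
This Gram matrix is the matrix of `c ↦ λ(c · -)` in the basis and its dual basis.
-/

theorem Matrix.isUnit_det_of_antitriangular {R : Type*} [CommRing R] {n : ℕ}
    (M : Matrix (Fin n) (Fin n) R)
    (hzero : ∀ i j : Fin n, (i : ℕ) + j < n - 1 → M i j = 0)
    (hunit : ∀ i j : Fin n, (i : ℕ) + j = n - 1 → IsUnit (M i j)) :
    IsUnit M.det := by
  set N := M.submatrix id Fin.revPerm
  have hN : N.BlockTriangular OrderDual.toDual := by
    intro i j (hij : i < j)
    exact hzero i (Fin.rev j) (by rw [Fin.val_rev]; omega)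
  have hdetN : IsUnit N.det := by
    rw [Matrix.det_of_isLowerTriangular N hN]
    refine IsUnit.prod_univ_iff.mpr fun i ↦ hunit i (Fin.rev i) ?_
    rw [Fin.val_rev]
    omega
  rw [Matrix.det_permute'] at hdetN
  exact isUnit_of_mul_isUnit_right hdetN

theorem bijective_comp_mul_of_isUnit_det {A C ι : Type*} [CommRing A] [Ring C] [Algebra A C]
    [Fintype ι] [DecidableEq ι] (b : Module.Basis ι A C) (lam : C →ₗ[A] A)
    (h : IsUnit (Matrix.of fun i j ↦ lam (b i * b j)).det) :
    Function.Bijective fun c : C ↦ lam.comp (LinearMap.mul A C c) := by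
  let Φ := (LinearMap.mul A C).compr₂ lam
  have hΦ : LinearMap.toMatrix b b.dualBasis Φ =
      (Matrix.of fun i j ↦ lam (b i * b j)).transpose := by
    ext i j
    simp [LinearMap.toMatrix_apply, Φ]
  rw [← Matrix.det_transpose, ← hΦ] at h
  exact (LinearEquiv.ofIsUnitDet h).bijective

theorem dual_free_rank_one_on_lambda_general
    (A : Type*) [CommRing A] (f : A[X]) (hf : f.Monic)
    (lam : AdjoinRoot f →ₗ[A] A)
    (hlam : ∀ i : Fin f.natDegree,
      lam ((AdjoinRoot.root f) ^ (i : ℕ)) = if (i : ℕ) = f.natDegree - 1 then 1 else 0) :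
    Function.Bijective
      (fun c : AdjoinRoot f => lam.comp (LinearMap.mul A (AdjoinRoot f) c)) := by
  set B := AdjoinRoot.powerBasis' hf
  have hdim : B.dim = f.natDegree := AdjoinRoot.powerBasis'_dim hf
  have hgram : ∀ i j : Fin B.dim, (Matrix.of fun i j ↦ lam (B.basis i * B.basis j)) i j =
      lam (AdjoinRoot.root f ^ ((i : ℕ) + j)) := by
    simp [B, pow_add]
  refine bijective_comp_mul_of_isUnit_det B.basis lam
    (Matrix.isUnit_det_of_antitriangular _ (fun i j hij ↦ ?_) (fun i j hij ↦ ?_))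
  · rw [hgram, hlam ⟨_, by omega⟩, if_neg (by simp only; omega)]
  · rw [hgram, hlam ⟨_, by omega⟩, if_pos (by simp only; omega)]
    exact isUnit_one

/-- **The dual of `A[T]/(f)` is free of rank one on the Tate functional.**
Let `A` be a commutative ring, `f ∈ A[T]` monic of degree `n ≥ 1`,
`C = A[T]/(f)`, `γ` the image of `T`, and `λ : C → A` the `A`-linear
functional with `λ(γ^i) = δ_{i,n-1}` for `0 ≤ i ≤ n-1`.  Then the `C`-linear
map `C → Hom_A(C, A)`, `c ↦ (x ↦ λ (c * x))`, is bijective; in particular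
`Hom_A(C, A)` is free of rank one over `C` with generator `λ`. -/
theorem dual_free_rank_one_on_lambda
    (A : Type*) [CommRing A] (f : A[X]) (hf : f.Monic) (hn : 1 ≤ f.natDegree)
    (lam : AdjoinRoot f →ₗ[A] A)
    (hlam : ∀ i : Fin f.natDegree,
      lam ((AdjoinRoot.root f) ^ (i : ℕ)) = if (i : ℕ) = f.natDegree - 1 then 1 else 0) :
    Function.Bijective
      (fun c : AdjoinRoot f => lam.comp (LinearMap.mul A (AdjoinRoot f) c)) :=
  dual_free_rank_one_on_lambda_general A f hf lam hlam
end

section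
/- Let A be a commutative ring, f ∈ A[T] monic of degree n ≥ 1, C = A[T]/(f), γ the image of T, and assume that f′(γ) is invertible in C. Then for 0 ≤ i ≤ n−1, the trace tr_{C/A}(γ^i · f′(γ)^{−1}) equals 1 if i = n−1 and 0 otherwise (Euler's formula). -/
/-! Write `c_j(x)` for the coordinate of `x ∈ C` along `γ^j`. Multiplying by `γ` shifts the
coordinates and reduces the overflow with `f`: `c_{j+1}(γx) = c_j(x) - f_{j+1} c_{n-1}(x)`.
Iterating down from `c_n = 0` gives `c_i(γ^i x) = ∑_{i ≤ m < n} f_{m+1} c_{n-1}(γ^m x)`, and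
summing these diagonal entries of the matrix of `x` gives
`tr(x) = ∑_m (m+1) f_{m+1} c_{n-1}(γ^m x) = c_{n-1}(f'(γ) x)`.
For `x = γ^i f'(γ)⁻¹` the right-hand side is the coordinate of `γ^i` along `γ^{n-1}`. -/

open Polynomial

namespace Polynomial

variable {A : Type*} [CommRing A] [Nontrivial A] {f : A[X]}

theorem modByMonic_X_mul_of_degree_lt (hf : f.Monic) (hn : f.natDegree ≠ 0) {p : A[X]}
    (hp : p.degree < f.degree) :
    (X * p) %ₘ f = X * p - C (p.coeff (f.natDegree - 1)) * f := by
  have hf_deg : f.degree = f.natDegree := degree_eq_natDegree hf.ne_zero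
  rw [hf_deg] at hp
  have hroot_muluced : (X * p - C (p.coeff (f.natDegree - 1)) * f).degree < f.degree := by
    rw [hf_deg, degree_lt_iff_coeff_zero]
    intro m hm
    obtain ⟨m, rfl⟩ : ∃ m', m = m' + 1 := ⟨m - 1, by omega⟩
    rw [coeff_sub, coeff_X_mul, coeff_C_mul]
    rcases hm.eq_or_lt with hm | hm
    · rw [← hm, hf.coeff_natDegree, mul_one, hm, Nat.add_sub_cancel, sub_self]
    · rw [(degree_lt_iff_coeff_zero p _).1 hp m (by omega),
        coeff_eq_zero_of_natDegree_lt hm, mul_zero, sub_zero]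
  rw [modByMonic_eq_of_dvd_sub hf (p₂ := X * p - C (p.coeff (f.natDegree - 1)) * f)
    ⟨C (p.coeff (f.natDegree - 1)), by ring⟩, (modByMonic_eq_self_iff hf).2 hroot_muluced]

end Polynomial

namespace AdjoinRoot

variable {A : Type*} [CommRing A] {f : A[X]}

/-- The coordinate along `root f ^ j` in the basis `1, root f, …, root f ^ (natDegree f - 1)`;
zero for `j ≥ natDegree f`. -/
noncomputable def powCoord (hf : f.Monic) (j : ℕ) : AdjoinRoot f →ₗ[A] A :=
  (lcoeff A j).comp (modByMonicHom hf)

theorem powCoord_apply (hf : f.Monic) (j : ℕ) (x : AdjoinRoot f) :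
    powCoord hf j x = (modByMonicHom hf x).coeff j :=
  rfl

theorem trace_eq_sum_powCoord (hf : f.Monic) (x : AdjoinRoot f) :
    Algebra.trace A (AdjoinRoot f) x =
      ∑ i ∈ Finset.range f.natDegree, powCoord hf i (root f ^ i * x) := by
  classical
  rw [Algebra.trace_eq_matrix_trace (powerBasis' hf).basis, Matrix.trace,
    ← Fin.sum_univ_eq_sum_range]
  refine Finset.sum_congr rfl fun i _ => ?_
  rw [Matrix.diag_apply, Algebra.leftMulMatrix_eq_repr_mul, PowerBasis.coe_basis,
    powerBasis'_gen, mul_comm]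
  rfl

variable [Nontrivial A]

theorem powCoord_natDegree (hf : f.Monic) (x : AdjoinRoot f) : powCoord hf f.natDegree x = 0 := by
  obtain ⟨p, rfl⟩ := mk_surjective x
  rw [powCoord_apply, modByMonicHom_mk]
  exact coeff_eq_zero_of_degree_lt (degree_eq_natDegree hf.ne_zero ▸ degree_modByMonic_lt p hf)

theorem powCoord_succ_root_mul (hf : f.Monic) (hn : f.natDegree ≠ 0) (x : AdjoinRoot f)
    (j : ℕ) :
    powCoord hf (j + 1) (root f * x) =
      powCoord hf j x - f.coeff (j + 1) * powCoord hf (f.natDegree - 1) x := by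
  obtain ⟨p, rfl⟩ := mk_surjective x
  have hroot_mul : root f * mk f p = mk f (X * (p %ₘ f)) := by
    rw [map_mul, mk_X, ← modByMonicHom_mk hf, mk_leftInverse hf]
  simp only [powCoord_apply, hroot_mul, modByMonicHom_mk,
    modByMonic_X_mul_of_degree_lt hf hn (degree_modByMonic_lt p hf), coeff_sub, coeff_X_mul,
    coeff_C_mul]
  ring

theorem powCoord_root_pow_mul (hf : f.Monic) (hn : f.natDegree ≠ 0) (x : AdjoinRoot f)
    (i : ℕ) :
    powCoord hf i (root f ^ i * x) = powCoord hf 0 x -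
      ∑ m ∈ Finset.range i, f.coeff (m + 1) * powCoord hf (f.natDegree - 1) (root f ^ m * x) := by
  induction i with
  | zero => simp
  | succ i ih =>
    rw [pow_succ', mul_assoc, powCoord_succ_root_mul hf hn, ih, Finset.sum_range_succ]
    ring

theorem powCoord_root_pow_mul_eq_sum_Ico (hf : f.Monic) (hn : f.natDegree ≠ 0)
    (x : AdjoinRoot f) {i : ℕ} (hi : i ≤ f.natDegree) :
    powCoord hf i (root f ^ i * x) =
      ∑ m ∈ Finset.Ico i f.natDegree,
        f.coeff (m + 1) * powCoord hf (f.natDegree - 1) (root f ^ m * x) := by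
  have htop := powCoord_root_pow_mul hf hn x f.natDegree
  rw [powCoord_natDegree, ← Finset.sum_range_add_sum_Ico _ hi] at htop
  rw [powCoord_root_pow_mul hf hn]
  linear_combination -htop

theorem trace_eq_powCoord_aeval_derivative_mul (hf : f.Monic) (hn : f.natDegree ≠ 0)
    (x : AdjoinRoot f) :
    Algebra.trace A (AdjoinRoot f) x =
      powCoord hf (f.natDegree - 1) (aeval (root f) (derivative f) * x) := by
  rw [trace_eq_sum_powCoord hf, aeval_eq_sum_range' (natDegree_derivative_lt hn),
    Finset.sum_mul, map_sum, Finset.range_eq_Ico]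
  rw [Finset.sum_congr rfl fun i hi =>
    powCoord_root_pow_mul_eq_sum_Ico hf hn x (Finset.mem_Ico.1 hi).2.le, Finset.sum_Ico_Ico_comm]
  refine Finset.sum_congr rfl fun m _ => ?_
  rw [Finset.sum_const, Nat.card_Ico, smul_mul_assoc, map_smul, coeff_derivative, smul_eq_mul,
    nsmul_eq_mul]
  push_cast
  ring

end AdjoinRoot

theorem trace_pow_mul_inv_derivative_general
    (A : Type*) [CommRing A] (f : A[X]) (hf : f.Monic)
    (hu : IsUnit ((Polynomial.aeval (AdjoinRoot.root f)) (Polynomial.derivative f)))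
    (i : ℕ) (hi : i < f.natDegree) :
    LinearMap.trace A (AdjoinRoot f)
        (LinearMap.mul A (AdjoinRoot f)
          ((AdjoinRoot.root f) ^ i *
            Ring.inverse ((Polynomial.aeval (AdjoinRoot.root f)) (Polynomial.derivative f)))) =
      if i = f.natDegree - 1 then 1 else 0 := by
  nontriviality A
  have hX_pow : (X ^ i : A[X]) %ₘ f = X ^ i := by
    rw [modByMonic_eq_self_iff hf, degree_X_pow, degree_eq_natDegree hf.ne_zero]
    exact_mod_cast hi
  change Algebra.trace A (AdjoinRoot f) _ = _
  rw [AdjoinRoot.trace_eq_powCoord_aeval_derivative_mul hf (by omega), mul_left_comm,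
    Ring.mul_inverse_cancel _ hu, mul_one, AdjoinRoot.powCoord_apply, ← AdjoinRoot.mk_X, ← map_pow,
    AdjoinRoot.modByMonicHom_mk, hX_pow, coeff_X_pow]
  exact if_congr eq_comm rfl rfl

/-- **Euler's formula.**  Let `A` be a commutative ring, `f ∈ A[T]` monic of
degree `n ≥ 1`, `C = A[T]/(f)`, `γ` the image of `T`, and assume `f'(γ)` is
invertible in `C`.  Then for `0 ≤ i ≤ n-1`,
`tr_{C/A}(γ^i · f'(γ)⁻¹)` is `1` if `i = n-1` and `0` otherwise. -/
theorem trace_pow_mul_inv_derivative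
    (A : Type*) [CommRing A] (f : A[X]) (hf : f.Monic) (hn : 1 ≤ f.natDegree)
    (hu : IsUnit ((Polynomial.aeval (AdjoinRoot.root f)) (Polynomial.derivative f)))
    (i : ℕ) (hi : i < f.natDegree) :
    LinearMap.trace A (AdjoinRoot f)
        (LinearMap.mul A (AdjoinRoot f)
          ((AdjoinRoot.root f) ^ i *
            Ring.inverse ((Polynomial.aeval (AdjoinRoot.root f)) (Polynomial.derivative f)))) =
      if i = f.natDegree - 1 then 1 else 0 :=
  trace_pow_mul_inv_derivative_general A f hf hu i hi
end

section
/- (Tate) In the setting of Tate's isomorphism t : Hom_A(C, A) ≅ C, let λ = t^{−1}(1) be the canonical trace (a free C-module generator of Hom_A(C, A)) and let m : C ⊗_A C → C be the multiplication map. Then the canonical trace map tr_{C/A} : C → A (trace of multiplication on the finite free A-module C) satisfies tr_{C/A}(c) = λ(m(Δ̄)·c) for all c ∈ C. -/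
/-!
Write `C = B ⧸ I` and `Δ̄ = (π ⊗ 1)(Δ)`. Since `f = h g` and every `b ⊗ 1 - 1 ⊗ b̄` lies in
`J = (g)`, Cramer's rule shows that `(b ⊗ 1 - 1 ⊗ b̄) Δ` lies in `(f ⊗ 1)`, which `π ⊗ 1` kills;
hence `(d ⊗ 1) Δ̄ = (1 ⊗ d) Δ̄` for all `d ∈ C`. Let `Φ(w)` be the endomorphism
`z ↦ (1 ⊗ λ)((1 ⊗ z) w)` of `C`. The symmetry of `Δ̄` and `(1 ⊗ λ)(Δ̄) = t(λ) = 1` give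
`Φ(Δ̄) = id`, while for `w = x ⊗ y` the map `c · Φ(w)` has rank one and trace `λ(x y c)`.
So `tr(c) = tr(c · Φ(Δ̄)) = λ(m(Δ̄) c)`.
-/

open scoped TensorProduct
open Matrix

namespace Matrix

variable {R ι : Type*} [CommRing R] [Fintype ι] [DecidableEq ι]

theorem det_mul_mem_span_range_mulVec (h : Matrix ι ι R) (g : ι → R) (k : ι) :
    h.det * g k ∈ Ideal.span (Set.range (h *ᵥ g)) := by
  have hcramer : h.det • g = h.adjugate *ᵥ (h *ᵥ g) := by
    rw [mulVec_mulVec, adjugate_mul, smul_mulVec, one_mulVec]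
  rw [← smul_eq_mul, ← Pi.smul_apply, hcramer]
  exact (Submodule.mem_span_range_iff_exists_fun R).2 ⟨h.adjugate k, rfl⟩

theorem mul_det_mem_span_range_mulVec (h : Matrix ι ι R) (g : ι → R) {x : R}
    (hx : x ∈ Ideal.span (Set.range g)) : x * h.det ∈ Ideal.span (Set.range (h *ᵥ g)) := by
  have hcolon : Ideal.span (Set.range g) ≤
      (Ideal.span (Set.range (h *ᵥ g))).colon {h.det} := by
    rw [Ideal.span_le]
    rintro _ ⟨k, rfl⟩
    rw [SetLike.mem_coe, Submodule.mem_colon_singleton, smul_eq_mul, mul_comm]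
    exact det_mul_mem_span_range_mulVec h g k
  simpa using hcolon hx

end Matrix

section Symmetry

variable {A B ι : Type*} [CommRing A] [CommRing B] [Algebra A B] {I : Ideal B}
  [Fintype ι] [DecidableEq ι]

theorem tmul_one_mul_map_det_eq_one_tmul_mul_map_det (f : ι → B) (hfI : ∀ i, f i ∈ I)
    (s : B ⊗[A] (B ⧸ I) →ₐ[A] (B ⧸ I))
    (hs : ∀ (b : B) (c : B ⧸ I), s (b ⊗ₜ c) = Ideal.Quotient.mk I b * c)
    (g : ι → B ⊗[A] (B ⧸ I)) (hJ : RingHom.ker s = Ideal.span (Set.range g))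
    (h : Matrix ι ι (B ⊗[A] (B ⧸ I))) (hh : ∀ i, (f i) ⊗ₜ[A] (1 : B ⧸ I) = ∑ j, h i j * g j)
    (d : B ⧸ I) :
    (d ⊗ₜ[A] 1) * Algebra.TensorProduct.map (Ideal.Quotient.mkₐ A I) (AlgHom.id A _) h.det =
      (1 ⊗ₜ[A] d) * Algebra.TensorProduct.map (Ideal.Quotient.mkₐ A I) (AlgHom.id A _) h.det := by
  set π := Algebra.TensorProduct.map (Ideal.Quotient.mkₐ A I) (AlgHom.id A (B ⧸ I))
  obtain ⟨b, rfl⟩ := Ideal.Quotient.mk_surjective d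
  have hmulVec : h *ᵥ g = fun i => f i ⊗ₜ[A] (1 : B ⧸ I) := funext fun i => (hh i).symm
  have hker : b ⊗ₜ[A] 1 - 1 ⊗ₜ[A] Ideal.Quotient.mk I b ∈ Ideal.span (Set.range g) := by
    rw [← hJ, RingHom.mem_ker, map_sub, hs, hs, map_one, one_mul, mul_one, sub_self]
  have hπ : Ideal.span (Set.range (h *ᵥ g)) ≤ RingHom.ker π := by
    rw [hmulVec, Ideal.span_le]
    rintro _ ⟨i, rfl⟩
    simp [π, Ideal.Quotient.eq_zero_iff_mem.2 (hfI i)]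
  have hzero := hπ (mul_det_mem_span_range_mulVec h g hker)
  simpa [π, sub_mul, sub_eq_zero] using hzero

end Symmetry

section TraceFormula

variable {A C : Type*} [CommRing A] [CommRing C] [Algebra A C] (lam : C →ₗ[A] A)

/-- The map `1 ⊗ λ : C ⊗[A] C → C ⊗[A] A = C`, in the form in which it defines `t`. -/
noncomputable def rightApply : C ⊗[A] C →ₗ[A] C :=
  TensorProduct.lift (((LinearMap.lsmul A C).comp lam).flip)

@[simp]
theorem rightApply_tmul (x y : C) : rightApply lam (x ⊗ₜ y) = lam y • x := rfl

theorem rightApply_tmul_one_mul (d : C) (w : C ⊗[A] C) :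
    rightApply lam ((d ⊗ₜ 1) * w) = d * rightApply lam w := by
  induction w using TensorProduct.induction_on with
  | zero => simp
  | tmul x y => simp
  | add x y hx hy => rw [mul_add, map_add, map_add, hx, hy, mul_add]

noncomputable def rightApplyEnd (w : C ⊗[A] C) : Module.End A C :=
  rightApply lam ∘ₗ LinearMap.mulRight A w ∘ₗ Algebra.TensorProduct.includeRight.toLinearMap

@[simp]
theorem rightApplyEnd_apply (w : C ⊗[A] C) (z : C) :
    rightApplyEnd lam w z = rightApply lam ((1 ⊗ₜ z) * w) := rfl

theorem rightApplyEnd_add (w w' : C ⊗[A] C) :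
    rightApplyEnd lam (w + w') = rightApplyEnd lam w + rightApplyEnd lam w' :=
  LinearMap.ext fun z => by simp [mul_add]

theorem trace_mul_comp_rightApplyEnd [Module.Free A C] [Module.Finite A C] (c : C)
    (w : C ⊗[A] C) :
    LinearMap.trace A C (LinearMap.mul A C c ∘ₗ rightApplyEnd lam w) =
      lam (LinearMap.mul' A C w * c) := by
  induction w using TensorProduct.induction_on with
  | zero => simp [rightApplyEnd]
  | tmul x y =>
    have hrankOne : LinearMap.mul A C c ∘ₗ rightApplyEnd lam (x ⊗ₜ y) =
        dualTensorHom A C C ((lam ∘ₗ LinearMap.mul A C y) ⊗ₜ (c * x)) := by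
      ext z
      simp [mul_comm z y]
    rw [hrankOne, LinearMap.trace_eq_contract_apply, contractLeft_apply]
    simp only [LinearMap.comp_apply, LinearMap.mul_apply', LinearMap.mul'_apply]
    rw [mul_comm x y, mul_assoc, mul_comm x c]
  | add x y hx hy =>
    rw [rightApplyEnd_add, LinearMap.comp_add, map_add, hx, hy, map_add, add_mul, map_add]

theorem rightApplyEnd_eq_id {Δ : C ⊗[A] C} (hsymm : ∀ d : C, (d ⊗ₜ 1) * Δ = (1 ⊗ₜ d) * Δ)
    (hΔ : rightApply lam Δ = 1) : rightApplyEnd lam Δ = LinearMap.id :=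
  LinearMap.ext fun z => by
    rw [rightApplyEnd_apply, ← hsymm, rightApply_tmul_one_mul, hΔ, mul_one, LinearMap.id_apply]

theorem trace_mul_eq_of_symm [Module.Free A C] [Module.Finite A C] {Δ : C ⊗[A] C}
    (hsymm : ∀ d : C, (d ⊗ₜ 1) * Δ = (1 ⊗ₜ d) * Δ) (hΔ : rightApply lam Δ = 1) (c : C) :
    LinearMap.trace A C (LinearMap.mul A C c) = lam (LinearMap.mul' A C Δ * c) := by
  rw [← trace_mul_comp_rightApplyEnd, rightApplyEnd_eq_id lam hsymm hΔ, LinearMap.comp_id]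

end TraceFormula

theorem tate_trace_formula_general
    (A : Type*) [CommRing A] (B : Type*) [CommRing B] [Algebra A B]
    (n : ℕ) (f : Fin n → B)
    (I : Ideal B) (hI : I = Ideal.span (Set.range f))
    [Module.Finite A (B ⧸ I)] [Module.Free A (B ⧸ I)]
    (s : B ⊗[A] (B ⧸ I) →ₐ[A] (B ⧸ I))
    (hs : ∀ (b : B) (c : B ⧸ I), s (b ⊗ₜ c) = Ideal.Quotient.mk I b * c)
    (g : Fin n → B ⊗[A] (B ⧸ I))
    (hJ : RingHom.ker s = Ideal.span (Set.range g))
    (h : Matrix (Fin n) (Fin n) (B ⊗[A] (B ⧸ I)))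
    (hh : ∀ i, (f i) ⊗ₜ[A] (1 : B ⧸ I) = ∑ j, h i j * g j)
    (Δbar : (B ⧸ I) ⊗[A] (B ⧸ I))
    (hΔbar : Δbar =
      (Algebra.TensorProduct.map (Ideal.Quotient.mkₐ A I) (AlgHom.id A (B ⧸ I))) h.det)
    (T : ((B ⧸ I) →ₗ[A] A) → (B ⧸ I))
    (hT : ∀ φ : (B ⧸ I) →ₗ[A] A,
      T φ = TensorProduct.lift (((LinearMap.lsmul A (B ⧸ I)).comp φ).flip) Δbar)
    -- `λ = t⁻¹(1)`
    (lam : (B ⧸ I) →ₗ[A] A) (hlam : T lam = 1) (c : B ⧸ I) :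
    LinearMap.trace A (B ⧸ I) (LinearMap.mul A (B ⧸ I) c) =
      lam (LinearMap.mul' A (B ⧸ I) Δbar * c) := by
  have hfI : ∀ i, f i ∈ I := fun i => hI ▸ Ideal.subset_span ⟨i, rfl⟩
  have hsymm : ∀ d : B ⧸ I, (d ⊗ₜ[A] 1) * Δbar = (1 ⊗ₜ[A] d) * Δbar := by
    subst hΔbar
    exact tmul_one_mul_map_det_eq_one_tmul_mul_map_det f hfI s hs g hJ h hh
  have hΔ : rightApply lam Δbar = 1 := (hT lam).symm.trans hlam
  exact trace_mul_eq_of_symm lam hsymm hΔ c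

/-- **Tate's trace formula.**
In the setting of Tate's isomorphism `t : Hom_A(C, A) ≅ C`, let `λ = t⁻¹(1)`
be the canonical trace and `m : C ⊗_A C → C` the multiplication map.  Then the
canonical trace map `tr_{C/A} : C → A` satisfies
`tr_{C/A}(c) = λ(m(Δ̄)·c)` for all `c ∈ C`. -/
theorem tate_trace_formula
    (A : Type*) [CommRing A] (B : Type*) [CommRing B] [Algebra A B]
    (n : ℕ) (f : Fin n → B)
    (hf : RingTheory.Sequence.IsRegular B (List.ofFn f))
    (I : Ideal B) (hI : I = Ideal.span (Set.range f))
    [Module.Finite A (B ⧸ I)] [Module.Free A (B ⧸ I)]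
    (s : B ⊗[A] (B ⧸ I) →ₐ[A] (B ⧸ I))
    (hs : ∀ (b : B) (c : B ⧸ I), s (b ⊗ₜ c) = Ideal.Quotient.mk I b * c)
    (g : Fin n → B ⊗[A] (B ⧸ I))
    (hg : RingTheory.Sequence.IsRegular (B ⊗[A] (B ⧸ I)) (List.ofFn g))
    (hJ : RingHom.ker s = Ideal.span (Set.range g))
    (h : Matrix (Fin n) (Fin n) (B ⊗[A] (B ⧸ I)))
    (hh : ∀ i, (f i) ⊗ₜ[A] (1 : B ⧸ I) = ∑ j, h i j * g j)
    (Δbar : (B ⧸ I) ⊗[A] (B ⧸ I))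
    (hΔbar : Δbar =
      (Algebra.TensorProduct.map (Ideal.Quotient.mkₐ A I) (AlgHom.id A (B ⧸ I))) h.det)
    (T : ((B ⧸ I) →ₗ[A] A) → (B ⧸ I))
    (hT : ∀ φ : (B ⧸ I) →ₗ[A] A,
      T φ = TensorProduct.lift (((LinearMap.lsmul A (B ⧸ I)).comp φ).flip) Δbar)
    -- `λ = t⁻¹(1)`
    (lam : (B ⧸ I) →ₗ[A] A) (hlam : T lam = 1) (c : B ⧸ I) :
    LinearMap.trace A (B ⧸ I) (LinearMap.mul A (B ⧸ I) c) =
      lam (LinearMap.mul' A (B ⧸ I) Δbar * c) :=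
  tate_trace_formula_general A B n f I hI s hs g hJ h hh Δbar hΔbar T hT lam hlam c
end

section
/- (Tate's key lemma) In Tate's setup, let Hom_B(B ⊗_A C, B) be viewed as a module over B ⊗_A C via (x·ψ)(y) = ψ(xy). If ψ ∈ J · Hom_B(B ⊗_A C, B), i.e. ψ is a sum of elements x·ψ′ with x ∈ J, then π(ψ(Δ)) = 0 in C. -/
/-!
Since `h *ᵥ g = f ⊗ 1`, multiplying by the adjugate of `h` gives `Δ · J ⊆ (f ⊗ 1) = I · (B ⊗_A C)`,
and every `B`-linear map `B ⊗_A C → B` sends `I · (B ⊗_A C)` into `I`. Hence each summand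
`ψ'ᵢ(xᵢ Δ)` of `ψ(Δ)` lies in `I`.
-/

open scoped TensorProduct Matrix

theorem Matrix.mulVec_mem_span_range {R m n : Type*} [CommSemiring R] [Fintype n]
    (M : Matrix m n R) (v : n → R) (i : m) : (M *ᵥ v) i ∈ Ideal.span (Set.range v) :=
  Ideal.sum_mem _ fun j _ => Ideal.mul_mem_left _ _ (Ideal.subset_span ⟨j, rfl⟩)

theorem Matrix.det_mul_mem_span_range_mulVec_s5 {R n : Type*} [CommRing R] [Fintype n]
    [DecidableEq n] (M : Matrix n n R) (v : n → R) {z : R}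
    (hz : z ∈ Ideal.span (Set.range v)) : M.det * z ∈ Ideal.span (Set.range (M *ᵥ v)) := by
  have hle : Ideal.span (Set.range v) ≤
      Submodule.comap (LinearMap.mulLeft R M.det) (Ideal.span (Set.range (M *ᵥ v))) := by
    rw [Ideal.span_le]
    rintro _ ⟨j, rfl⟩
    have hcramer : M.adjugate *ᵥ (M *ᵥ v) = M.det • v := by
      rw [mulVec_mulVec, adjugate_mul, smul_mulVec, one_mulVec]
    have := M.adjugate.mulVec_mem_span_range (M *ᵥ v) j
    rwa [hcramer] at this
  exact hle hz

theorem LinearMap.apply_mem_of_mem_map_algebraMap {R S : Type*} [CommSemiring R]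
    [CommSemiring S] [Algebra R S] (φ : S →ₗ[R] R) {I : Ideal R} {y : S}
    (hy : y ∈ I.map (algebraMap R S)) : φ y ∈ I := by
  rw [← Submodule.restrictScalars_mem R, ← Ideal.smul_top_eq_map] at hy
  refine Submodule.smul_induction_on hy (fun r hr s _ => ?_) (fun _ _ h₁ h₂ => ?_)
  · rw [map_smul, smul_eq_mul]
    exact I.mul_mem_right _ hr
  · rw [map_add]
    exact I.add_mem h₁ h₂

theorem tate_key_lemma_general
    (A : Type*) [CommRing A] (B : Type*) [CommRing B] [Algebra A B]
    (n : ℕ) (f : Fin n → B)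
    (I : Ideal B) (hI : I = Ideal.span (Set.range f))
    (s : B ⊗[A] (B ⧸ I) →ₐ[A] (B ⧸ I))
    (g : Fin n → B ⊗[A] (B ⧸ I))
    (hJ : RingHom.ker s = Ideal.span (Set.range g))
    (h : Matrix (Fin n) (Fin n) (B ⊗[A] (B ⧸ I)))
    (hh : ∀ i, (f i) ⊗ₜ[A] (1 : B ⧸ I) = ∑ j, h i j * g j)
    -- `ψ ∈ J · Hom_B(B ⊗_A C, B)`
    (ψ : (B ⊗[A] (B ⧸ I)) →ₗ[B] B)
    (hψ : ∃ (m : ℕ) (x : Fin m → B ⊗[A] (B ⧸ I))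
        (ψ' : Fin m → ((B ⊗[A] (B ⧸ I)) →ₗ[B] B)),
      (∀ i, x i ∈ RingHom.ker s) ∧ ∀ y, ψ y = ∑ i, ψ' i (x i * y)) :
    Ideal.Quotient.mk I (ψ h.det) = 0 := by
  obtain ⟨m, x, ψ', hx, hψ⟩ := hψ
  have hspan : Ideal.span (Set.range (h *ᵥ g)) = I.map (algebraMap B (B ⊗[A] (B ⧸ I))) := by
    have hmulVec : h *ᵥ g = fun i => algebraMap B (B ⊗[A] (B ⧸ I)) (f i) :=
      funext fun i => (hh i).symm
    rw [hmulVec, Set.range_comp', ← Ideal.map_span, ← hI]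
  rw [Ideal.Quotient.eq_zero_iff_mem, hψ]
  refine Ideal.sum_mem _ fun i _ => (ψ' i).apply_mem_of_mem_map_algebraMap ?_
  rw [← hspan, mul_comm]
  exact h.det_mul_mem_span_range_mulVec_s5 g (hJ ▸ hx i)

/-- **Tate's key lemma.**
In Tate's setup, view `Hom_B(B ⊗_A C, B)` as a module over `B ⊗_A C` via
`(x·ψ)(y) = ψ(xy)`.  If `ψ ∈ J · Hom_B(B ⊗_A C, B)`, i.e. `ψ` is a finite sum
of elements `x·ψ'` with `x ∈ J`, then `π(ψ(Δ)) = 0` in `C`. -/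
theorem tate_key_lemma
    (A : Type*) [CommRing A] (B : Type*) [CommRing B] [Algebra A B]
    (n : ℕ) (f : Fin n → B)
    (hf : RingTheory.Sequence.IsRegular B (List.ofFn f))
    (I : Ideal B) (hI : I = Ideal.span (Set.range f))
    [Module.Finite A (B ⧸ I)] [Module.Free A (B ⧸ I)]
    (s : B ⊗[A] (B ⧸ I) →ₐ[A] (B ⧸ I))
    (hs : ∀ (b : B) (c : B ⧸ I), s (b ⊗ₜ c) = Ideal.Quotient.mk I b * c)
    (g : Fin n → B ⊗[A] (B ⧸ I))
    (hg : RingTheory.Sequence.IsRegular (B ⊗[A] (B ⧸ I)) (List.ofFn g))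
    (hJ : RingHom.ker s = Ideal.span (Set.range g))
    (h : Matrix (Fin n) (Fin n) (B ⊗[A] (B ⧸ I)))
    (hh : ∀ i, (f i) ⊗ₜ[A] (1 : B ⧸ I) = ∑ j, h i j * g j)
    -- `ψ ∈ J · Hom_B(B ⊗_A C, B)`
    (ψ : (B ⊗[A] (B ⧸ I)) →ₗ[B] B)
    (hψ : ∃ (m : ℕ) (x : Fin m → B ⊗[A] (B ⧸ I))
        (ψ' : Fin m → ((B ⊗[A] (B ⧸ I)) →ₗ[B] B)),
      (∀ i, x i ∈ RingHom.ker s) ∧ ∀ y, ψ y = ∑ i, ψ' i (x i * y)) :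
    Ideal.Quotient.mk I (ψ h.det) = 0 :=
  tate_key_lemma_general A B n f I hI s g hJ h hh ψ hψ
end

section
/- Let A be a commutative ring and f₁, …, f_n ∈ A[T₁, …, T_n] a regular sequence in the polynomial ring such that C := A[T]/(f₁, …, f_n) is a finite free A-module. Let γ_i ∈ C be the image of T_i, and suppose the kernel of A[T] ⊗_A C → C is generated by the regular sequence g_i = T_i ⊗ 1 − 1 ⊗ γ_i. Let λ : C → A be Tate's trace (the inverse image of 1 ∈ C under Tate's isomorphism Hom_A(C, A) ≅ C), and let J ∈ C be the image in C of the Jacobian determinant det(∂f_i/∂T_j). Then tr_{C/A}(c) = λ(J·c) for all c ∈ C. -/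
/-!
Write `Δ = det h` and `μ : C ⊗ C → C` for the multiplication. Expanding `f_i ⊗ 1` to first order
about the diagonal gives a second matrix expressing `f ⊗ 1` in the `g_j`, whose image under
`A[T] ⊗ C → C` is the Jacobian matrix; since relations among a regular sequence are Koszul
relations, the two matrices agree modulo `(g)`, hence `μ(Δ̄) = J`. By Cramer's rule
`Δ · (g) ⊆ (f ⊗ 1)`, and `(g)` contains every `p ⊗ 1 - 1 ⊗ p̄`, so `(x ⊗ 1) Δ̄ = (1 ⊗ x) Δ̄` in
`C ⊗ C`. For such a `Δ̄` with `(1 ⊗ λ)(Δ̄) = 1`, multiplication by `c` is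
`d ↦ (1 ⊗ λ)((1 ⊗ c) Δ̄ (1 ⊗ d))`, and the trace of `d ↦ (1 ⊗ λ)(w (1 ⊗ d))` is `λ(μ w)`
(check it on `w = x ⊗ y`, where the map has rank one); so `tr(c) = λ(μ(Δ̄) c) = λ(J c)`.
-/

open scoped TensorProduct Matrix
open RingTheory.Sequence

theorem Submodule.mem_ideal_span_range_smul_top_iff {R M ι : Type*} [CommRing R] [AddCommGroup M]
    [Module R M] [Fintype ι] (g : ι → R) (x : M) :
    x ∈ Ideal.span (Set.range g) • (⊤ : Submodule R M) ↔ ∃ c : ι → M, ∑ i, g i • c i = x := by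
  constructor
  · intro hx
    refine Submodule.smul_induction_on hx (fun r hr y _ => ?_) ?_
    · obtain ⟨a, rfl⟩ := (Submodule.mem_span_range_iff_exists_fun R).mp hr
      exact ⟨fun i => a i • y, by simp [Finset.sum_smul, smul_smul, mul_comm]⟩
    · rintro _ _ ⟨c, rfl⟩ ⟨d, rfl⟩
      exact ⟨c + d, by simp [Finset.sum_add_distrib]⟩
  · rintro ⟨c, rfl⟩
    exact Submodule.sum_mem _ fun i _ =>
      Submodule.smul_mem_smul (Ideal.subset_span ⟨i, rfl⟩) Submodule.mem_top

theorem Matrix.det_mul_mem_span_mulVec {R n : Type*} [CommRing R] [Fintype n] [DecidableEq n]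
    (h : Matrix n n R) (g : n → R) {y : R} (hy : y ∈ Ideal.span (Set.range g)) :
    h.det * y ∈ Ideal.span (Set.range (h *ᵥ g)) := by
  obtain ⟨a, rfl⟩ := (Submodule.mem_span_range_iff_exists_fun R).mp hy
  have hcramer : ∀ i, h.det * g i = (h.adjugate *ᵥ (h *ᵥ g)) i := fun i => by
    simp [Matrix.mulVec_mulVec, Matrix.adjugate_mul, Matrix.smul_mulVec]
  rw [Finset.mul_sum]
  refine Ideal.sum_mem _ fun i _ => ?_
  rw [smul_eq_mul, mul_left_comm, hcramer]
  exact Ideal.mul_mem_left _ _ <| Ideal.sum_mem _ fun k _ =>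
    Ideal.mul_mem_left _ _ (Ideal.subset_span (Set.mem_range_self k))

namespace RingTheory.Sequence.IsWeaklyRegular

variable {R : Type*} [CommRing R]

/-- The first Koszul homology of a weakly regular sequence vanishes. -/
theorem mem_ideal_span_smul_top_of_sum_smul_eq_zero {M : Type*} [AddCommGroup M] [Module R M]
    {n : ℕ} {g : Fin n → R} (hg : IsWeaklyRegular M (List.ofFn g)) {m : Fin n → M}
    (hm : ∑ j, g j • m j = 0) (j : Fin n) :
    m j ∈ Ideal.span (Set.range g) • (⊤ : Submodule R M) := by
  induction n with
  | zero => exact j.elim0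
  | succ n ih =>
    rw [List.ofFn_succ', List.concat_eq_append, isWeaklyRegular_append_iff,
      isWeaklyRegular_singleton_iff] at hg
    obtain ⟨hinit, hlast⟩ := hg
    set g' : Fin n → R := fun i => g i.castSucc
    have hofList : Ideal.ofList (List.ofFn g') = Ideal.span (Set.range g') :=
      congrArg Ideal.span (Set.ext fun _ => List.mem_ofFn)
    rw [hofList] at hlast
    have hle : Ideal.span (Set.range g') • (⊤ : Submodule R M) ≤ Ideal.span (Set.range g) • ⊤ :=
      Submodule.smul_mono_left (Ideal.span_mono (Set.range_comp_subset_range _ _))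
    rw [Fin.sum_univ_castSucc] at hm
    have hlast_mem : m (Fin.last n) ∈ Ideal.span (Set.range g') • (⊤ : Submodule R M) := by
      rw [← Submodule.Quotient.mk_eq_zero]
      refine hlast ?_
      change g (Fin.last n) • Submodule.Quotient.mk _ = g (Fin.last n) • 0
      rw [smul_zero, ← Submodule.Quotient.mk_smul, Submodule.Quotient.mk_eq_zero,
        eq_neg_of_add_eq_zero_right hm, Submodule.neg_mem_iff,
        Submodule.mem_ideal_span_range_smul_top_iff]
      exact ⟨_, rfl⟩
    obtain ⟨c, hc⟩ := (Submodule.mem_ideal_span_range_smul_top_iff g' _).mp hlast_mem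
    have hinit_mem : ∀ i : Fin n,
        m i.castSucc + g (Fin.last n) • c i ∈ Ideal.span (Set.range g') • (⊤ : Submodule R M) := by
      refine ih hinit ?_
      simp only [smul_add, Finset.sum_add_distrib, smul_comm (g' _) (g (Fin.last n)),
        ← Finset.smul_sum, hc]
      exact hm
    refine Fin.lastCases (hle hlast_mem) (fun i => ?_) j
    rw [← add_sub_cancel_right (m i.castSucc) (g (Fin.last n) • c i)]
    exact sub_mem (hle (hinit_mem i))
      (Submodule.smul_mem_smul (Ideal.subset_span ⟨_, rfl⟩) Submodule.mem_top)

theorem mem_ideal_span_of_sum_mul_eq_zero {n : ℕ} {g : Fin n → R}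
    (hg : IsWeaklyRegular R (List.ofFn g)) {v : Fin n → R} (hv : ∑ j, v j * g j = 0)
    (j : Fin n) : v j ∈ Ideal.span (Set.range g) := by
  simpa only [smul_eq_mul, Ideal.mul_top] using hg.mem_ideal_span_smul_top_of_sum_smul_eq_zero
    (m := v) (by simpa only [smul_eq_mul, mul_comm] using hv) j

theorem det_sub_det_mem_ideal_span {n : ℕ} {g : Fin n → R}
    (hg : IsWeaklyRegular R (List.ofFn g)) {h h' : Matrix (Fin n) (Fin n) R}
    (hhg : ∀ i, ∑ j, h i j * g j = ∑ j, h' i j * g j) :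
    h.det - h'.det ∈ Ideal.span (Set.range g) := by
  have hentry : ∀ i j, h i j - h' i j ∈ Ideal.span (Set.range g) := fun i =>
    hg.mem_ideal_span_of_sum_mul_eq_zero <| by
      simpa only [sub_mul, Finset.sum_sub_distrib, sub_eq_zero] using hhg i
  rw [← Ideal.Quotient.eq, RingHom.map_det, RingHom.map_det]
  congr 1
  ext i j
  exact Ideal.Quotient.eq.mpr (hentry i j)

end RingTheory.Sequence.IsWeaklyRegular

namespace MvPolynomial

open Algebra.TensorProduct (productMap productMap_apply_tmul)

variable {A σ B : Type*} [CommRing A] [CommRing B] [Algebra A B]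
  (φ : MvPolynomial σ A →ₐ[A] B)

noncomputable def diagonalDifference (p : MvPolynomial σ A) : MvPolynomial σ A ⊗[A] B :=
  p ⊗ₜ 1 - 1 ⊗ₜ φ p

theorem productMap_diagonalDifference (p : MvPolynomial σ A) :
    productMap φ (AlgHom.id A B) (diagonalDifference φ p) = 0 := by
  simp [diagonalDifference]

theorem map_diagonalDifference (p : MvPolynomial σ A) :
    Algebra.TensorProduct.map φ (AlgHom.id A B) (diagonalDifference φ p) =
      φ p ⊗ₜ 1 - 1 ⊗ₜ φ p := by
  simp [diagonalDifference]

theorem diagonalDifference_add (p q : MvPolynomial σ A) :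
    diagonalDifference φ (p + q) = diagonalDifference φ p + diagonalDifference φ q := by
  simp only [diagonalDifference, map_add, TensorProduct.add_tmul, TensorProduct.tmul_add]
  abel

theorem diagonalDifference_mul (p q : MvPolynomial σ A) :
    diagonalDifference φ (p * q) =
      (p ⊗ₜ 1) * diagonalDifference φ q + (1 ⊗ₜ φ q) * diagonalDifference φ p := by
  simp only [diagonalDifference, map_mul, mul_sub, Algebra.TensorProduct.tmul_mul_tmul, mul_one,
    one_mul]
  rw [mul_comm (φ q) (φ p)]
  abel

variable [Fintype σ]

def IsTaylorExpansion (p : MvPolynomial σ A) (v : σ → MvPolynomial σ A ⊗[A] B) : Prop :=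
  diagonalDifference φ p = ∑ j, v j * diagonalDifference φ (X j) ∧
    ∀ j, productMap φ (AlgHom.id A B) (v j) = φ (pderiv j p)

theorem isTaylorExpansion_C (a : A) : IsTaylorExpansion φ (C a) 0 := by
  refine ⟨?_, fun j => by simp⟩
  simp [diagonalDifference, C_eq_smul_one, TensorProduct.smul_tmul]

theorem isTaylorExpansion_X [DecidableEq σ] (i : σ) :
    IsTaylorExpansion φ (X i) (Pi.single i 1) := by
  refine ⟨?_, fun j => ?_⟩
  · simp [Pi.single_apply]
  · rcases eq_or_ne j i with rfl | hji
    · simp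
    · simp [pderiv_X, hji, hji.symm]

theorem IsTaylorExpansion.add {p q : MvPolynomial σ A} {v w : σ → MvPolynomial σ A ⊗[A] B}
    (hp : IsTaylorExpansion φ p v) (hq : IsTaylorExpansion φ q w) :
    IsTaylorExpansion φ (p + q) (v + w) := by
  refine ⟨?_, fun j => ?_⟩
  · simp only [diagonalDifference_add, hp.1, hq.1, Pi.add_apply, add_mul, Finset.sum_add_distrib]
  · simp [hp.2 j, hq.2 j]

theorem IsTaylorExpansion.mul {p q : MvPolynomial σ A} {v w : σ → MvPolynomial σ A ⊗[A] B}
    (hp : IsTaylorExpansion φ p v) (hq : IsTaylorExpansion φ q w) :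
    IsTaylorExpansion φ (p * q) (fun j => (p ⊗ₜ 1) * w j + (1 ⊗ₜ φ q) * v j) := by
  refine ⟨?_, fun j => ?_⟩
  · simp only [diagonalDifference_mul, hp.1, hq.1, add_mul, Finset.sum_add_distrib,
      Finset.mul_sum, mul_assoc]
  · simp only [map_add, map_mul, productMap_apply_tmul, hp.2 j, hq.2 j, pderiv_mul, map_one,
      AlgHom.id_apply]
    ring

theorem exists_isTaylorExpansion (p : MvPolynomial σ A) :
    ∃ v, IsTaylorExpansion φ p v := by
  classical
  induction p using MvPolynomial.induction_on with
  | C a => exact ⟨0, isTaylorExpansion_C φ a⟩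
  | add p q hp hq =>
    obtain ⟨v, hv⟩ := hp
    obtain ⟨w, hw⟩ := hq
    exact ⟨_, hv.add φ hw⟩
  | mul_X p i hp =>
    obtain ⟨v, hv⟩ := hp
    exact ⟨_, hv.mul φ (isTaylorExpansion_X φ i)⟩

theorem productMap_det_eq_det_jacobian {n : ℕ} {φ : MvPolynomial (Fin n) A →ₐ[A] B}
    (f : Fin n → MvPolynomial (Fin n) A) (hf : ∀ i, φ (f i) = 0)
    (hg : IsWeaklyRegular (MvPolynomial (Fin n) A ⊗[A] B)
      (List.ofFn fun j => diagonalDifference φ (X j)))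
    (h : Matrix (Fin n) (Fin n) (MvPolynomial (Fin n) A ⊗[A] B))
    (hh : ∀ i, f i ⊗ₜ 1 = ∑ j, h i j * diagonalDifference φ (X j)) :
    productMap φ (AlgHom.id A B) h.det = φ (Matrix.of fun i j => pderiv j (f i)).det := by
  choose v hv using fun i => exists_isTaylorExpansion φ (f i)
  have hvh : ∀ i, ∑ j, v i j * diagonalDifference φ (X j) =
      ∑ j, h i j * diagonalDifference φ (X j) := fun i => by
    rw [← (hv i).1, ← hh i, diagonalDifference, hf i, TensorProduct.tmul_zero, sub_zero]
  have hker : Ideal.span (Set.range fun j => diagonalDifference φ (X j)) ≤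
      RingHom.ker (productMap φ (AlgHom.id A B)) :=
    Ideal.span_le.mpr <| Set.range_subset_iff.mpr fun j => productMap_diagonalDifference φ _
  have hdet := RingHom.mem_ker.mp (hker (hg.det_sub_det_mem_ideal_span (h := Matrix.of v) hvh))
  rw [map_sub, sub_eq_zero] at hdet
  rw [← hdet, AlgHom.map_det, AlgHom.map_det]
  congr 1
  ext i j
  exact (hv i).2 j

theorem tmul_one_mul_map_det_eq_one_tmul_mul {n : ℕ} {φ : MvPolynomial (Fin n) A →ₐ[A] B}
    (hφ : Function.Surjective φ) (f : Fin n → MvPolynomial (Fin n) A) (hf : ∀ i, φ (f i) = 0)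
    (hker : RingHom.ker (productMap φ (AlgHom.id A B)) =
      Ideal.span (Set.range fun j => diagonalDifference φ (X j)))
    (h : Matrix (Fin n) (Fin n) (MvPolynomial (Fin n) A ⊗[A] B))
    (hh : ∀ i, f i ⊗ₜ 1 = ∑ j, h i j * diagonalDifference φ (X j)) (x : B) :
    (x ⊗ₜ 1) * Algebra.TensorProduct.map φ (AlgHom.id A B) h.det =
      (1 ⊗ₜ x) * Algebra.TensorProduct.map φ (AlgHom.id A B) h.det := by
  obtain ⟨p, rfl⟩ := hφ x
  have hp : diagonalDifference φ p ∈
      Ideal.span (Set.range fun j => diagonalDifference φ (X j)) :=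
    hker ▸ RingHom.mem_ker.mpr (productMap_diagonalDifference φ p)
  have hmulVec : (h *ᵥ fun j => diagonalDifference φ (X j)) = fun i => f i ⊗ₜ 1 := by
    ext i
    exact (hh i).symm
  have hπ : Ideal.span (Set.range fun i => f i ⊗ₜ[A] (1 : B)) ≤
      RingHom.ker (Algebra.TensorProduct.map φ (AlgHom.id A B)) :=
    Ideal.span_le.mpr <| Set.range_subset_iff.mpr fun i => by simp [hf i]
  have hzero := RingHom.mem_ker.mp (hπ (hmulVec ▸ h.det_mul_mem_span_mulVec _ hp))
  rw [map_mul, map_diagonalDifference] at hzero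
  linear_combination hzero

end MvPolynomial

section TateTrace

open TensorProduct LinearMap

variable {A C : Type*} [CommRing A] [CommRing C] [Algebra A C] (lam : C →ₗ[A] A)

theorem lift_lsmul_flip_tmul_one_mul (x : C) (z : C ⊗[A] C) :
    lift ((lsmul A C ∘ₗ lam).flip) ((x ⊗ₜ 1) * z) = x * lift ((lsmul A C ∘ₗ lam).flip) z := by
  induction z using TensorProduct.induction_on with
  | zero => simp
  | tmul a b => simp [Algebra.TensorProduct.tmul_mul_tmul]
  | add z w hz hw => rw [mul_add, map_add, map_add, hz, hw, mul_add]

theorem trace_lift_lsmul_flip_comp_mul_comp_mk [Module.Free A C] [Module.Finite A C]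
    (w : C ⊗[A] C) :
    trace A C (lift ((lsmul A C ∘ₗ lam).flip) ∘ₗ mul A (C ⊗[A] C) w ∘ₗ mk A C C 1) =
      lam (Algebra.TensorProduct.lmul' A w) := by
  induction w using TensorProduct.induction_on with
  | zero => simp
  | tmul x y =>
    have hrank_one : lift ((lsmul A C ∘ₗ lam).flip) ∘ₗ mul A (C ⊗[A] C) (x ⊗ₜ y) ∘ₗ mk A C C 1 =
        dualTensorHom A C C ((lam ∘ₗ mul A C y) ⊗ₜ x) := by
      ext d
      simp [Algebra.TensorProduct.tmul_mul_tmul]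
    rw [hrank_one, trace_eq_contract_apply, contractLeft_apply,
      Algebra.TensorProduct.lmul'_apply_tmul, comp_apply, mul_apply', mul_comm]
  | add z w hz hw => rw [map_add, add_comp, comp_add, map_add, hz, hw, map_add, map_add]

theorem trace_mul_eq_of_tmul_one_mul_eq [Module.Free A C] [Module.Finite A C] {Δ : C ⊗[A] C}
    (hΔ : lift ((lsmul A C ∘ₗ lam).flip) Δ = 1)
    (hdiag : ∀ x : C, (x ⊗ₜ 1) * Δ = (1 ⊗ₜ x) * Δ) (c : C) :
    trace A C (mul A C c) = lam (Algebra.TensorProduct.lmul' A Δ * c) := by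
  have hmul : mul A C c =
      lift ((lsmul A C ∘ₗ lam).flip) ∘ₗ mul A (C ⊗[A] C) ((1 ⊗ₜ c) * Δ) ∘ₗ mk A C C 1 := by
    ext d
    have hcd : (1 ⊗ₜ c) * Δ * (1 ⊗ₜ d) = ((c * d) ⊗ₜ 1) * Δ := by
      rw [hdiag, mul_right_comm, Algebra.TensorProduct.tmul_mul_tmul, one_mul]
    simp only [mul_apply', comp_apply, mk_apply, hcd,
      lift_lsmul_flip_tmul_one_mul, hΔ, mul_one]
  rw [hmul, trace_lift_lsmul_flip_comp_mul_comp_mk, map_mul,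
    Algebra.TensorProduct.lmul'_apply_tmul, one_mul, mul_comm]

end TateTrace

theorem tate_trace_jacobian_general
    (A : Type*) [CommRing A]
    (n : ℕ) (f : Fin n → MvPolynomial (Fin n) A)
    (I : Ideal (MvPolynomial (Fin n) A)) (hI : I = Ideal.span (Set.range f))
    [Module.Finite A (MvPolynomial (Fin n) A ⧸ I)]
    [Module.Free A (MvPolynomial (Fin n) A ⧸ I)]
    (s : (MvPolynomial (Fin n) A) ⊗[A] (MvPolynomial (Fin n) A ⧸ I) →ₐ[A]
      (MvPolynomial (Fin n) A ⧸ I))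
    (hs : ∀ (b : MvPolynomial (Fin n) A) (c : MvPolynomial (Fin n) A ⧸ I),
      s (b ⊗ₜ c) = Ideal.Quotient.mk I b * c)
    -- the diagonal generators `g_i = T_i ⊗ 1 − 1 ⊗ γ_i`
    (g : Fin n → (MvPolynomial (Fin n) A) ⊗[A] (MvPolynomial (Fin n) A ⧸ I))
    (hgdef : ∀ i, g i =
      (MvPolynomial.X i) ⊗ₜ[A] (1 : MvPolynomial (Fin n) A ⧸ I) -
        (1 : MvPolynomial (Fin n) A) ⊗ₜ[A] (Ideal.Quotient.mk I (MvPolynomial.X i)))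
    (hg : RingTheory.Sequence.IsRegular
      ((MvPolynomial (Fin n) A) ⊗[A] (MvPolynomial (Fin n) A ⧸ I)) (List.ofFn g))
    (hJ : RingHom.ker s = Ideal.span (Set.range g))
    (h : Matrix (Fin n) (Fin n) ((MvPolynomial (Fin n) A) ⊗[A] (MvPolynomial (Fin n) A ⧸ I)))
    (hh : ∀ i, (f i) ⊗ₜ[A] (1 : MvPolynomial (Fin n) A ⧸ I) = ∑ j, h i j * g j)
    (Δbar : (MvPolynomial (Fin n) A ⧸ I) ⊗[A] (MvPolynomial (Fin n) A ⧸ I))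
    (hΔbar : Δbar =
      (Algebra.TensorProduct.map (Ideal.Quotient.mkₐ A I)
        (AlgHom.id A (MvPolynomial (Fin n) A ⧸ I))) h.det)
    (T : ((MvPolynomial (Fin n) A ⧸ I) →ₗ[A] A) → (MvPolynomial (Fin n) A ⧸ I))
    (hT : ∀ φ, T φ = TensorProduct.lift
      (((LinearMap.lsmul A (MvPolynomial (Fin n) A ⧸ I)).comp φ).flip) Δbar)
    (lam : (MvPolynomial (Fin n) A ⧸ I) →ₗ[A] A) (hlam : T lam = 1)
    (c : MvPolynomial (Fin n) A ⧸ I) :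
    LinearMap.trace A (MvPolynomial (Fin n) A ⧸ I)
        (LinearMap.mul A (MvPolynomial (Fin n) A ⧸ I) c) =
      lam (Ideal.Quotient.mk I
        (Matrix.det (Matrix.of fun i j => MvPolynomial.pderiv j (f i))) * c) := by
  obtain rfl : s = Algebra.TensorProduct.productMap (Ideal.Quotient.mkₐ A I) (AlgHom.id A _) :=
    Algebra.TensorProduct.ext' hs
  obtain rfl : g = fun j => MvPolynomial.diagonalDifference (Ideal.Quotient.mkₐ A I) (.X j) :=
    funext hgdef
  have hfI : ∀ i, Ideal.Quotient.mkₐ A I (f i) = 0 := fun i =>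
    Ideal.Quotient.eq_zero_iff_mem.mpr (hI ▸ Ideal.subset_span ⟨i, rfl⟩)
  have hjacobian : Algebra.TensorProduct.lmul' A Δbar =
      Ideal.Quotient.mk I (Matrix.det (Matrix.of fun i j => MvPolynomial.pderiv j (f i))) := by
    rw [hΔbar, ← AlgHom.comp_apply, ← Algebra.TensorProduct.productMap_eq_comp_map]
    exact MvPolynomial.productMap_det_eq_det_jacobian f hfI hg.toIsWeaklyRegular h hh
  have hdiag := MvPolynomial.tmul_one_mul_map_det_eq_one_tmul_mul
    (Ideal.Quotient.mkₐ_surjective A I) f hfI hJ h hh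
  rw [trace_mul_eq_of_tmul_one_mul_eq lam ((hT lam).symm.trans hlam) (hΔbar ▸ hdiag) c,
    hjacobian]

/-- **Tate's trace via the Jacobian.**
Let `A` be a commutative ring and `f₁, …, f_n ∈ A[T₁, …, T_n]` a regular
sequence with `C := A[T]/(f)` finite free over `A`.  Let `γ_i` be the image of
`T_i`, suppose the kernel of `A[T] ⊗_A C → C` is generated by the regular
sequence `g_i = T_i ⊗ 1 − 1 ⊗ γ_i`, let `λ` be Tate's trace (`λ = t⁻¹(1)` for
Tate's isomorphism `t`), and let `J ∈ C` be the image of the Jacobian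
`det(∂f_i/∂T_j)`.  Then `tr_{C/A}(c) = λ(J·c)` for all `c`. -/
theorem tate_trace_jacobian
    (A : Type*) [CommRing A]
    (n : ℕ) (f : Fin n → MvPolynomial (Fin n) A)
    (hf : RingTheory.Sequence.IsRegular (MvPolynomial (Fin n) A) (List.ofFn f))
    (I : Ideal (MvPolynomial (Fin n) A)) (hI : I = Ideal.span (Set.range f))
    [Module.Finite A (MvPolynomial (Fin n) A ⧸ I)]
    [Module.Free A (MvPolynomial (Fin n) A ⧸ I)]
    (s : (MvPolynomial (Fin n) A) ⊗[A] (MvPolynomial (Fin n) A ⧸ I) →ₐ[A]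
      (MvPolynomial (Fin n) A ⧸ I))
    (hs : ∀ (b : MvPolynomial (Fin n) A) (c : MvPolynomial (Fin n) A ⧸ I),
      s (b ⊗ₜ c) = Ideal.Quotient.mk I b * c)
    -- the diagonal generators `g_i = T_i ⊗ 1 − 1 ⊗ γ_i`
    (g : Fin n → (MvPolynomial (Fin n) A) ⊗[A] (MvPolynomial (Fin n) A ⧸ I))
    (hgdef : ∀ i, g i =
      (MvPolynomial.X i) ⊗ₜ[A] (1 : MvPolynomial (Fin n) A ⧸ I) -
        (1 : MvPolynomial (Fin n) A) ⊗ₜ[A] (Ideal.Quotient.mk I (MvPolynomial.X i)))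
    (hg : RingTheory.Sequence.IsRegular
      ((MvPolynomial (Fin n) A) ⊗[A] (MvPolynomial (Fin n) A ⧸ I)) (List.ofFn g))
    (hJ : RingHom.ker s = Ideal.span (Set.range g))
    (h : Matrix (Fin n) (Fin n) ((MvPolynomial (Fin n) A) ⊗[A] (MvPolynomial (Fin n) A ⧸ I)))
    (hh : ∀ i, (f i) ⊗ₜ[A] (1 : MvPolynomial (Fin n) A ⧸ I) = ∑ j, h i j * g j)
    (Δbar : (MvPolynomial (Fin n) A ⧸ I) ⊗[A] (MvPolynomial (Fin n) A ⧸ I))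
    (hΔbar : Δbar =
      (Algebra.TensorProduct.map (Ideal.Quotient.mkₐ A I)
        (AlgHom.id A (MvPolynomial (Fin n) A ⧸ I))) h.det)
    (T : ((MvPolynomial (Fin n) A ⧸ I) →ₗ[A] A) → (MvPolynomial (Fin n) A ⧸ I))
    (hT : ∀ φ, T φ = TensorProduct.lift
      (((LinearMap.lsmul A (MvPolynomial (Fin n) A ⧸ I)).comp φ).flip) Δbar)
    (lam : (MvPolynomial (Fin n) A ⧸ I) →ₗ[A] A) (hlam : T lam = 1)
    (c : MvPolynomial (Fin n) A ⧸ I) :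
    LinearMap.trace A (MvPolynomial (Fin n) A ⧸ I)
        (LinearMap.mul A (MvPolynomial (Fin n) A ⧸ I) c) =
      lam (Ideal.Quotient.mk I
        (Matrix.det (Matrix.of fun i j => MvPolynomial.pderiv j (f i))) * c) :=
  tate_trace_jacobian_general A n f I hI s hs g hgdef hg hJ h hh Δbar hΔbar T hT lam hlam c
end

section
/- Let A be a commutative noetherian ring and B a commutative noetherian A-algebra that is flat over A. Then the set of associated primes of B satisfies Ass_B(B) = ⋃_{p ∈ Ass_A(A)} Ass_B(B/pB). In particular, the contraction to A of any associated prime of B is an associated prime of A. -/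
/-!
Over a flat `A`-algebra `B`, colon ideals commute with base change: `(J : I)B = (JB : IB)` for
`I` finitely generated. Hence if `p = (0 : x)` is associated to `A`, then `(pB : c) = (0 : xc)`,
so `Ass_B(B/pB) ⊆ Ass_B(B)`. For `q = (0 : b) ∈ Ass_B(B)` and `p = q ∩ A`, the element `b` lies
in `(0 : p)B`; writing `(0 : p) = (y₁, …, yₘ)`, the prime `p` contains `⋂ⱼ (0 : yⱼ)`, hence some
`(0 : yⱼ)`, which then equals `p`. Finally every `q ∈ Ass_B(B/IB)` lies in `Ass_B(B/pB)` for a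
prime `p` of `A`, by noetherian induction on `I`: for `(I : x) ∈ Ass_A(A/I)`, either `q` is also
associated to `B/(I + xA)B`, or `q = ((I : x)B : u)` for some `u`. Such a `p` is the contraction
of `q`, so it is associated to `A` by the previous step.
-/

open TensorProduct

namespace Ideal

variable {R : Type*} [CommRing R]

theorem colon_singleton_colon_singleton (J : Ideal R) (a b : R) :
    (J.colon {a}).colon {b} = J.colon {a * b} := by
  ext r
  simp only [Submodule.mem_colon_singleton, smul_eq_mul, mul_assoc, mul_comm b]

theorem colon_singleton_eq_of_sub_mem {J : Ideal R} {a b : R} (h : a - b ∈ J) :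
    J.colon {a} = J.colon {b} := by
  ext r
  simp only [Submodule.mem_colon_singleton, smul_eq_mul]
  have : r * a - r * b ∈ J := by simpa [mul_sub] using J.mul_mem_left r h
  exact ⟨fun ha => by simpa using J.sub_mem ha this, fun hb => by simpa using J.add_mem this hb⟩

theorem IsPrime.colon_singleton_eq_of_notMem {q : Ideal R} (hq : q.IsPrime) {d : R} (hd : d ∉ q) :
    q.colon {d} = q := by
  ext r
  simp only [Submodule.mem_colon_singleton, smul_eq_mul]
  exact ⟨fun h => (hq.mem_or_mem h).resolve_right hd, fun h => q.mul_mem_right d h⟩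

theorem mem_associatedPrimes_quotient_iff [IsNoetherianRing R] {J q : Ideal R} :
    q ∈ associatedPrimes R (R ⧸ J) ↔ q.IsPrime ∧ ∃ c : R, q = J.colon {c} := by
  rw [AssociatedPrimes.mem_iff, isAssociatedPrime_iff, Submodule.Quotient.mk_surjective _ |>.exists]
  have (c : R) : (⊥ : Submodule R (R ⧸ J)).colon {Submodule.Quotient.mk c} = J.colon {c} := by
    ext r
    rw [Submodule.mem_colon_singleton, Submodule.mem_bot, ← Submodule.Quotient.mk_smul,
      Submodule.Quotient.mk_eq_zero, smul_eq_mul, Submodule.mem_colon_singleton, smul_eq_mul]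
  simp only [this]

end Ideal

section Flat

variable {A B : Type*} [CommRing A] [CommRing B] [Algebra A B] [Module.Flat A B]

theorem Module.Flat.mem_map_ker_of_tmul_eq_zero {N : Type*} [AddCommGroup N] [Module A N]
    (f : A →ₗ[A] N) {b : B} (hb : b ⊗ₜ[A] f 1 = 0) :
    b ∈ Ideal.map (algebraMap A B) (LinearMap.ker f) := by
  obtain ⟨t, ht⟩ := (Module.Flat.lTensor_exact B (LinearMap.exact_subtype_ker_map f)
    (b ⊗ₜ[A] 1)).mp (by rwa [LinearMap.lTensor_tmul])
  have hrid : TensorProduct.rid A B (b ⊗ₜ[A] 1) = b := by simp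
  rw [← hrid, ← ht]
  clear ht
  induction t using TensorProduct.induction_on with
  | zero => simp
  | tmul c k =>
    rw [LinearMap.lTensor_tmul, TensorProduct.rid_tmul, Algebra.smul_def]
    exact Ideal.mul_mem_right _ _ (Ideal.mem_map_of_mem _ k.2)
  | add u v hu hv => rw [map_add, map_add]; exact add_mem hu hv

namespace Ideal

theorem map_colon_range_of_flat (J : Ideal A) {ι : Type*} [Fintype ι] (a : ι → A) :
    (J.colon (Set.range a)).map (algebraMap A B) =
      (J.map (algebraMap A B)).colon (Set.range (algebraMap A B ∘ a)) := by
  classical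
  refine le_antisymm ?_ fun b hb => ?_
  · rw [map_le_iff_le_comap]
    intro z hz
    simp only [mem_comap, Submodule.mem_colon, Set.forall_mem_range, Function.comp_apply,
      smul_eq_mul, ← map_mul] at hz ⊢
    exact fun i => mem_map_of_mem _ (hz i)
  let f : A →ₗ[A] ι → A ⧸ J :=
    LinearMap.pi fun i => J.mkQ ∘ₗ LinearMap.toSpanSingleton A A (a i)
  have hker : LinearMap.ker f = J.colon (Set.range a) := by
    ext z
    simp [f, funext_iff, Submodule.mem_colon, -Quotient.mk_eq_mk]
  rw [← hker]
  refine Module.Flat.mem_map_ker_of_tmul_eq_zero f ?_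
  apply (TensorProduct.piRight A A B fun _ : ι => A ⧸ J).injective
  ext i
  apply (Algebra.TensorProduct.quotIdealMapEquivTensorQuot B J).symm.injective
  simp only [Submodule.mem_colon, Set.forall_mem_range] at hb
  simpa [f, Algebra.smul_def, ← Quotient.mk_algebraMap, ← map_mul, mul_comm,
    Quotient.eq_zero_iff_mem] using hb i

theorem map_colon_of_flat (J I : Ideal A) (hI : I.FG) :
    (J.colon I).map (algebraMap A B) = (J.map (algebraMap A B)).colon (I.map (algebraMap A B)) := by
  obtain ⟨n, a, rfl⟩ := Submodule.fg_iff_exists_fin_generating_family.mp hI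
  rw [colon_span, map_span, colon_span, ← Set.range_comp, J.map_colon_range_of_flat]

theorem map_colon_singleton_of_flat (J : Ideal A) (x : A) :
    (J.colon {x}).map (algebraMap A B) = (J.map (algebraMap A B)).colon {algebraMap A B x} := by
  simpa [Function.comp_def] using J.map_colon_range_of_flat (B := B) fun _ : Unit => x

theorem IsPrime.eq_colon_map_sup_or_exists_eq_colon_map_colon {I : Ideal A} {q : Ideal B}
    (hq : q.IsPrime) {c : B} (hc : q = (I.map (algebraMap A B)).colon {c}) (x : A) :
    q = ((I ⊔ span {x}).map (algebraMap A B)).colon {c} ∨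
      ∃ u : B, q = ((I.colon {x}).map (algebraMap A B)).colon {u} := by
  by_cases h : ((I ⊔ span {x}).map (algebraMap A B)).colon {c} ≤ q
  · exact .inl <| le_antisymm (hc ▸ Submodule.colon_mono (map_mono le_sup_left) le_rfl) h
  obtain ⟨d, hd, hdq⟩ := SetLike.not_le_iff_exists.mp h
  rw [Submodule.mem_colon_singleton, smul_eq_mul, map_sup, map_span,
    Set.image_singleton, Submodule.mem_sup] at hd
  obtain ⟨m, hm, w, hw, hmw⟩ := hd
  obtain ⟨u, rfl⟩ := mem_span_singleton'.mp hw
  refine .inr ⟨u, ?_⟩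
  calc q = q.colon {d} := (hq.colon_singleton_eq_of_notMem hdq).symm
    _ = (I.map (algebraMap A B)).colon {c * d} := by rw [hc, colon_singleton_colon_singleton]
    _ = (I.map (algebraMap A B)).colon {algebraMap A B x * u} :=
      colon_singleton_eq_of_sub_mem (by convert hm using 1; linear_combination -hmw)
    _ = ((I.colon {x}).map (algebraMap A B)).colon {u} := by
      rw [map_colon_singleton_of_flat, colon_singleton_colon_singleton]

theorem comap_eq_of_mem_associatedPrimes_quotient_map [IsNoetherianRing B] {p : Ideal A}
    (hp : p.IsPrime) {q : Ideal B} (hq : q ∈ associatedPrimes B (B ⧸ p.map (algebraMap A B))) :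
    q.comap (algebraMap A B) = p := by
  obtain ⟨hqprime, c, rfl⟩ := mem_associatedPrimes_quotient_iff.mp hq
  ext z
  rw [mem_comap, Submodule.mem_colon_singleton, smul_eq_mul]
  by_cases hz : z ∈ p
  · exact iff_of_true (mul_mem_right _ _ (mem_map_of_mem _ hz)) hz
  refine iff_of_false (fun hzc => hqprime.ne_top ?_) hz
  rw [mul_comm, ← smul_eq_mul, ← Submodule.mem_colon_singleton,
    ← map_colon_singleton_of_flat, hp.colon_singleton_eq_of_notMem hz] at hzc
  simpa [Submodule.colon_eq_top_iff_subset] using hzc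

theorem comap_mem_associatedPrimes_of_flat [IsNoetherianRing A] [IsNoetherianRing B]
    {q : Ideal B} (hq : q ∈ associatedPrimes B B) :
    q.comap (algebraMap A B) ∈ associatedPrimes A A := by
  obtain ⟨hqprime, b, rfl⟩ := isAssociatedPrime_iff.mp hq
  set p := ((⊥ : Ideal B).colon {b}).comap (algebraMap A B)
  set K := (⊥ : Ideal A).colon (p : Set A)
  have hbK : b ∈ K.map (algebraMap A B) := by
    rw [map_colon_of_flat _ _ (IsNoetherian.noetherian p), map_bot]
    exact Submodule.mem_colon.mpr fun s hs => by simpa [mul_comm] using map_comap_le hs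
  obtain ⟨m, y, hy⟩ :=
    Submodule.fg_iff_exists_fin_generating_family.mp (IsNoetherian.noetherian K)
  have hannK : Finset.univ.inf (fun j => (⊥ : Ideal A).colon {y j}) ≤ p := by
    intro z hz
    have hKz : K.map (algebraMap A B) ≤ (⊥ : Ideal B).colon {algebraMap A B z} := by
      rw [← hy, map_span, span_le]
      rintro _ ⟨_, ⟨j, rfl⟩, rfl⟩
      have hzj : z * y j = 0 := by simpa using Submodule.mem_finsetInf.mp hz j (Finset.mem_univ j)
      rw [SetLike.mem_coe, Submodule.mem_colon_singleton, smul_eq_mul, Submodule.mem_bot,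
        ← map_mul, mul_comm, hzj, map_zero]
    simpa [p, mul_comm] using hKz hbK
  obtain ⟨j, -, hj⟩ := (IsPrime.inf_le' (hqprime.comap _)).mp hannK
  have hyK : y j ∈ K := hy ▸ Submodule.subset_span (Set.mem_range_self j)
  refine isAssociatedPrime_iff.mpr ⟨hqprime.comap _, y j, le_antisymm ?_ hj⟩
  intro z hz
  simpa [mul_comm] using Submodule.mem_colon.mp hyK z hz

end Ideal

theorem exists_isPrime_mem_associatedPrimes_quotient_map [IsNoetherianRing A]
    [IsNoetherianRing B] (I : Ideal A) {q : Ideal B}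
    (hq : q ∈ associatedPrimes B (B ⧸ I.map (algebraMap A B))) :
    ∃ p : Ideal A, p.IsPrime ∧ q ∈ associatedPrimes B (B ⧸ p.map (algebraMap A B)) := by
  induction I using IsNoetherian.induction with
  | hgt I IH =>
  obtain ⟨hqprime, c, hc⟩ := Ideal.mem_associatedPrimes_quotient_iff.mp hq
  have hI : I ≠ ⊤ := by
    rintro rfl
    simp only [hc, Ideal.map_top, Submodule.top_colon] at hqprime
    exact hqprime.ne_top rfl
  have : Nontrivial (A ⧸ I) := Ideal.Quotient.nontrivial_iff.mpr hI
  obtain ⟨p, hp⟩ := associatedPrimes.nonempty A (A ⧸ I)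
  obtain ⟨hpprime, x, rfl⟩ := Ideal.mem_associatedPrimes_quotient_iff.mp hp
  have hxI : x ∉ I := fun hx => hpprime.ne_top (by simpa [Submodule.colon_eq_top_iff_subset])
  rcases hqprime.eq_colon_map_sup_or_exists_eq_colon_map_colon hc x with hq' | ⟨u, hu⟩
  · refine IH _ (lt_of_le_of_ne le_sup_left fun h => hxI ?_)
      (Ideal.mem_associatedPrimes_quotient_iff.mpr ⟨hqprime, c, hq'⟩)
    exact h ▸ Ideal.mem_sup_right (Ideal.mem_span_singleton_self x)
  · exact ⟨_, hpprime, Ideal.mem_associatedPrimes_quotient_iff.mpr ⟨hqprime, u, hu⟩⟩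

theorem associatedPrimes_quotient_map_subset_of_flat [IsNoetherianRing A] [IsNoetherianRing B]
    {p : Ideal A} (hp : p ∈ associatedPrimes A A) :
    associatedPrimes B (B ⧸ p.map (algebraMap A B)) ⊆ associatedPrimes B B := by
  obtain ⟨-, x, rfl⟩ := isAssociatedPrime_iff.mp hp
  intro q hq
  obtain ⟨hqprime, c, rfl⟩ := Ideal.mem_associatedPrimes_quotient_iff.mp hq
  refine isAssociatedPrime_iff.mpr ⟨hqprime, algebraMap A B x * c, ?_⟩
  rw [Ideal.map_colon_singleton_of_flat, Ideal.map_bot, Ideal.colon_singleton_colon_singleton]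

end Flat

/-- **Associated primes under flat base change.**
Let `A` be a commutative noetherian ring and `B` a commutative noetherian
`A`-algebra that is flat over `A`.  Then
`Ass_B(B) = ⋃_{p ∈ Ass_A(A)} Ass_B(B/pB)`; in particular the contraction to
`A` of any associated prime of `B` is an associated prime of `A`. -/
theorem associatedPrimes_flat_base_change
    (A B : Type*) [CommRing A] [CommRing B] [IsNoetherianRing A] [IsNoetherianRing B]
    [Algebra A B] [Module.Flat A B] :
    (associatedPrimes B B =
        ⋃ p ∈ associatedPrimes A A,
          associatedPrimes B (B ⧸ Ideal.map (algebraMap A B) p)) ∧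
      ∀ q ∈ associatedPrimes B B,
        Ideal.comap (algebraMap A B) q ∈ associatedPrimes A A := by
  refine ⟨subset_antisymm (fun q hq => ?_) (Set.iUnion₂_subset fun p hp =>
    associatedPrimes_quotient_map_subset_of_flat hp),
    fun q => Ideal.comap_mem_associatedPrimes_of_flat⟩
  have hq₀ : q ∈ associatedPrimes B (B ⧸ (⊥ : Ideal A).map (algebraMap A B)) := by
    rw [Ideal.map_bot]
    exact Ideal.mem_associatedPrimes_quotient_iff.mpr (isAssociatedPrime_iff.mp hq)
  obtain ⟨p, hp, hqp⟩ := exists_isPrime_mem_associatedPrimes_quotient_map ⊥ hq₀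
  have hpq := Ideal.comap_eq_of_mem_associatedPrimes_quotient_map hp hqp
  exact Set.mem_biUnion (hpq ▸ Ideal.comap_mem_associatedPrimes_of_flat hq) hqp
end
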